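/- arXiv:1212.3920 — 2 statements merged into one kernel-verified Lean document; each statement's English description precedes it below -/
import Mathlib

section
/- If in addition the function r ↦ h(r)/r is non-increasing on (0,∞), then the function κ ↦ σ(κ)/c(κ) is strictly increasing on (0, κ_max). -/
/-!
Write `I_m(κ) = ∫₀^π exp (κ cos θ) sin^m θ dθ` (`vonMisesIntegral m κ`). Integrating
`d/dθ (exp (κ cos θ) sin^(m+1) θ)` gives `c(κ) = κ I_{n}(κ) / ((n - 1) I_{n-2}(κ))`, so
`σ(κ)/c(κ) = (n - 1) · (σ(κ)/κ) · I_{n-2}(κ)/I_n(κ)`. The middle factor is non-decreasing because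
`h(r)/r` is non-increasing. For the last one, the reflection `θ ↦ π - θ` lets us replace
`exp (κ cos θ)` by `cosh (κ cos θ)`; then, for `0 ≤ a < b`, symmetrising the double integral of
`I_{n-2}(b) I_n(a) - I_{n-2}(a) I_n(b)` in `(θ, φ)` gives, with `w = sin^{n-2}`, the integrand
`w(θ) w(φ) (cos²φ - cos²θ) (cosh (a cos θ) cosh (b cos φ) - cosh (a cos φ) cosh (b cos θ))`,
which is non-negative (compare the arguments of `cosh` after the product-to-sum formula) and not
identically zero.
-/

open MeasureTheory Real Filter

/-- The order parameter `c(κ)` of the von Mises distribution in dimension `n`. -/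
noncomputable def orderParam (n : ℕ) (κ : ℝ) : ℝ :=
  (∫ θ in (0:ℝ)..π, Real.cos θ * Real.exp (κ * Real.cos θ) * Real.sin θ ^ (n - 2)) /
  (∫ θ in (0:ℝ)..π, Real.exp (κ * Real.cos θ) * Real.sin θ ^ (n - 2))

open Set

theorem intervalIntegral_pos_of_continuous_of_pos_at {f : ℝ → ℝ} (hf : Continuous f)
    {a b x₀ : ℝ} (hnonneg : ∀ x ∈ Icc a b, 0 ≤ f x) (hx₀ : x₀ ∈ Ioo a b) (hpos : 0 < f x₀) :
    0 < ∫ x in a..b, f x := by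
  have hab : a ≤ b := (hx₀.1.trans hx₀.2).le
  have hf_nonneg : 0 ≤ᵐ[volume.restrict (uIoc a b)] f := by
    rw [uIoc_of_le hab]
    exact ae_restrict_of_forall_mem measurableSet_Ioc fun x hx => hnonneg x (Ioc_subset_Icc_self hx)
  rw [intervalIntegral.integral_pos_iff_support_of_nonneg_ae' hf_nonneg (hf.intervalIntegrable a b)]
  refine ⟨hx₀.1.trans hx₀.2, ?_⟩
  have hopen : IsOpen (Function.support f ∩ Ioo a b) := hf.isOpen_support.inter isOpen_Ioo
  exact (hopen.measure_pos volume ⟨x₀, hpos.ne', hx₀⟩).trans_le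
    (measure_mono (inter_subset_inter_right _ Ioo_subset_Ioc_self))

theorem intervalIntegral_intervalIntegral_pos_of_continuous_of_pos_at {F : ℝ → ℝ → ℝ}
    (hF : Continuous F.uncurry) {a b c d x₀ y₀ : ℝ}
    (hnonneg : ∀ x ∈ Icc a b, ∀ y ∈ Icc c d, 0 ≤ F x y) (hx₀ : x₀ ∈ Ioo a b) (hy₀ : y₀ ∈ Ioo c d)
    (hpos : 0 < F x₀ y₀) :
    0 < ∫ x in a..b, ∫ y in c..d, F x y := by
  have hcd : c ≤ d := (hy₀.1.trans hy₀.2).le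
  refine intervalIntegral_pos_of_continuous_of_pos_at
    (intervalIntegral.continuous_parametric_intervalIntegral_of_continuous' hF c d)
    (fun x hx => intervalIntegral.integral_nonneg hcd (hnonneg x hx)) hx₀ ?_
  exact intervalIntegral_pos_of_continuous_of_pos_at (hF.uncurry_left x₀)
    (hnonneg x₀ (Ioo_subset_Icc_self hx₀)) hy₀ hpos

theorem intervalIntegral_intervalIntegral_add_swap {F : ℝ → ℝ → ℝ} (hF : Continuous F.uncurry)
    (a b : ℝ) :
    ∫ x in a..b, ∫ y in a..b, (F x y + F y x) = 2 * ∫ x in a..b, ∫ y in a..b, F x y := by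
  have hF_swap : Continuous (Function.uncurry fun x y => F y x) := hF.comp continuous_swap
  have hinner : ∀ x, ∫ y in a..b, (F x y + F y x) = (∫ y in a..b, F x y) + ∫ y in a..b, F y x :=
    fun x => intervalIntegral.integral_add ((hF.uncurry_left x).intervalIntegrable a b)
      ((hF_swap.uncurry_left x).intervalIntegrable a b)
  have hI := intervalIntegral.continuous_parametric_intervalIntegral_of_continuous'
    (μ := volume) hF a b
  have hI_swap := intervalIntegral.continuous_parametric_intervalIntegral_of_continuous'
    (μ := volume) hF_swap a b
  simp_rw [hinner]
  rw [intervalIntegral.integral_add (hI.intervalIntegrable a b) (hI_swap.intervalIntegrable a b),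
    intervalIntegral_intervalIntegral_swap
      ((hF_swap.continuousOn.integrableOn_compact (isCompact_uIcc.prod isCompact_uIcc)).mono_set
        (prod_mono uIoc_subset_uIcc uIoc_subset_uIcc)),
    two_mul]

theorem intervalIntegral_intervalIntegral_mul_sub_mul {f g f' g' : ℝ → ℝ} (hf : Continuous f)
    (hg : Continuous g) (hf' : Continuous f') (hg' : Continuous g') (a b c d : ℝ) :
    ∫ x in a..b, ∫ y in c..d, (f x * g y - f' x * g' y) =
      (∫ x in a..b, f x) * (∫ y in c..d, g y) - (∫ x in a..b, f' x) * ∫ y in c..d, g' y := by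
  have hinner : ∀ x, ∫ y in c..d, (f x * g y - f' x * g' y) =
      f x * (∫ y in c..d, g y) - f' x * ∫ y in c..d, g' y := fun x => by
    rw [intervalIntegral.integral_sub ((hg.const_mul _).intervalIntegrable c d)
      ((hg'.const_mul _).intervalIntegrable c d), intervalIntegral.integral_const_mul,
      intervalIntegral.integral_const_mul]
  simp_rw [hinner]
  rw [intervalIntegral.integral_sub ((hf.mul_const _).intervalIntegrable a b)
    ((hf'.mul_const _).intervalIntegrable a b), intervalIntegral.integral_mul_const,
    intervalIntegral.integral_mul_const]

theorem cosh_mul_cosh_lt_cosh_mul_cosh {a b u v : ℝ} (hab : a ^ 2 < b ^ 2) (huv : u ^ 2 < v ^ 2) :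
    cosh (a * v) * cosh (b * u) < cosh (a * u) * cosh (b * v) := by
  have hprod : ∀ x y, cosh x * cosh y = (cosh (x + y) + cosh (x - y)) / 2 := fun x y => by
    rw [cosh_add, cosh_sub]; ring
  have hgap := mul_pos (sub_pos.2 hab) (sub_pos.2 huv)
  have hadd : cosh (a * v + b * u) < cosh (a * u + b * v) :=
    cosh_lt_cosh.2 (sq_lt_sq.1 (by nlinarith))
  have hsub : cosh (a * v - b * u) < cosh (a * u - b * v) :=
    cosh_lt_cosh.2 (sq_lt_sq.1 (by nlinarith))
  rw [hprod, hprod]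
  linarith

theorem sq_sub_sq_mul_cosh_mul_cosh_sub_pos {a b u v : ℝ} (hab : a ^ 2 < b ^ 2)
    (huv : u ^ 2 ≠ v ^ 2) :
    0 < (v ^ 2 - u ^ 2) * (cosh (a * u) * cosh (b * v) - cosh (a * v) * cosh (b * u)) := by
  rcases huv.lt_or_gt with huv | hvu
  · exact mul_pos (sub_pos.2 huv) (sub_pos.2 (cosh_mul_cosh_lt_cosh_mul_cosh hab huv))
  · exact mul_pos_of_neg_of_neg (sub_neg.2 hvu) (sub_neg.2 (cosh_mul_cosh_lt_cosh_mul_cosh hab hvu))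

theorem sq_sub_sq_mul_cosh_mul_cosh_sub_nonneg {a b : ℝ} (hab : a ^ 2 < b ^ 2) (u v : ℝ) :
    0 ≤ (v ^ 2 - u ^ 2) * (cosh (a * u) * cosh (b * v) - cosh (a * v) * cosh (b * u)) := by
  by_cases huv : u ^ 2 = v ^ 2
  · simp [huv]
  · exact (sq_sub_sq_mul_cosh_mul_cosh_sub_pos hab huv).le

noncomputable def vonMisesIntegral (m : ℕ) (κ : ℝ) : ℝ :=
  ∫ θ in (0:ℝ)..π, exp (κ * cos θ) * sin θ ^ m

theorem vonMisesIntegral_pos (m : ℕ) (κ : ℝ) : 0 < vonMisesIntegral m κ :=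
  intervalIntegral.intervalIntegral_pos_of_pos_on
    ((by fun_prop : Continuous _).intervalIntegrable _ _)
    (fun θ hθ => mul_pos (exp_pos _) (pow_pos (sin_pos_of_pos_of_lt_pi hθ.1 hθ.2) m)) pi_pos

theorem vonMisesIntegral_eq_integral_cosh (m : ℕ) (κ : ℝ) :
    vonMisesIntegral m κ = ∫ θ in (0:ℝ)..π, cosh (κ * cos θ) * sin θ ^ m := by
  have hreflect : ∫ θ in (0:ℝ)..π, exp (-(κ * cos θ)) * sin θ ^ m = vonMisesIntegral m κ := by
    simpa [vonMisesIntegral, cos_pi_sub, sin_pi_sub] using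
      intervalIntegral.integral_comp_sub_left (a := 0) (b := π)
        (fun θ => exp (κ * cos θ) * sin θ ^ m) π
  calc vonMisesIntegral m κ = (vonMisesIntegral m κ + vonMisesIntegral m κ) / 2 := by ring
    _ = ∫ θ in (0:ℝ)..π, (exp (κ * cos θ) * sin θ ^ m + exp (-(κ * cos θ)) * sin θ ^ m) / 2 := by
      rw [intervalIntegral.integral_div, intervalIntegral.integral_add
        ((by fun_prop : Continuous _).intervalIntegrable _ _)
        ((by fun_prop : Continuous _).intervalIntegrable _ _), hreflect, vonMisesIntegral]
    _ = ∫ θ in (0:ℝ)..π, cosh (κ * cos θ) * sin θ ^ m := by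
      simp only [cosh_eq]; congr 1; ext θ; ring

theorem integral_cos_mul_exp_mul_sin_pow (m : ℕ) (κ : ℝ) :
    (m + 1) * ∫ θ in (0:ℝ)..π, cos θ * exp (κ * cos θ) * sin θ ^ m =
      κ * vonMisesIntegral (m + 2) κ := by
  have hderiv : ∀ θ, HasDerivAt (fun θ => exp (κ * cos θ) * sin θ ^ (m + 1))
      ((m + 1) * (cos θ * exp (κ * cos θ) * sin θ ^ m) - κ * (exp (κ * cos θ) * sin θ ^ (m + 2)))
      θ := fun θ => by
    refine (((hasDerivAt_cos θ).const_mul κ).exp.mul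
      ((hasDerivAt_sin θ).pow (m + 1))).congr_deriv ?_
    simp only [Pi.pow_apply, Nat.add_sub_cancel]
    push_cast
    ring
  have hFTC := intervalIntegral.integral_eq_sub_of_hasDerivAt (fun θ _ => hderiv θ)
    ((by fun_prop : Continuous _).intervalIntegrable 0 π)
  rw [intervalIntegral.integral_sub ((by fun_prop : Continuous _).intervalIntegrable _ _)
    ((by fun_prop : Continuous _).intervalIntegrable _ _), intervalIntegral.integral_const_mul,
    intervalIntegral.integral_const_mul] at hFTC
  simp only [sin_pi, sin_zero, ne_eq, Nat.add_eq_zero_iff, one_ne_zero, and_false,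
    not_false_eq_true, zero_pow, mul_zero, sub_zero] at hFTC
  rw [vonMisesIntegral]
  linarith

theorem orderParam_add_two (m : ℕ) (κ : ℝ) :
    orderParam (m + 2) κ = κ * vonMisesIntegral (m + 2) κ / ((m + 1) * vonMisesIntegral m κ) := by
  rw [orderParam, Nat.add_sub_cancel, ← integral_cos_mul_exp_mul_sin_pow, ← vonMisesIntegral,
    mul_div_mul_left _ _ (by positivity : (m + 1 : ℝ) ≠ 0)]

theorem vonMisesIntegral_mul_lt_mul {a b : ℝ} (ha : 0 ≤ a) (hab : a < b) (m : ℕ) :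
    vonMisesIntegral m a * vonMisesIntegral (m + 2) b <
      vonMisesIntegral m b * vonMisesIntegral (m + 2) a := by
  have hab2 : a ^ 2 < b ^ 2 := pow_lt_pow_left₀ hab ha two_ne_zero
  set K : ℝ → ℝ → ℝ := fun θ φ =>
    cosh (a * cos θ) * sin θ ^ (m + 2) * (cosh (b * cos φ) * sin φ ^ m) -
      cosh (a * cos θ) * sin θ ^ m * (cosh (b * cos φ) * sin φ ^ (m + 2)) with hK
  have hK_cont : Continuous K.uncurry := by rw [hK]; fun_prop
  have hK_integral : ∫ θ in (0:ℝ)..π, ∫ φ in (0:ℝ)..π, K θ φ =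
      vonMisesIntegral (m + 2) a * vonMisesIntegral m b -
        vonMisesIntegral m a * vonMisesIntegral (m + 2) b := by
    simp only [hK, vonMisesIntegral_eq_integral_cosh]
    exact intervalIntegral_intervalIntegral_mul_sub_mul (by fun_prop) (by fun_prop) (by fun_prop)
      (by fun_prop) _ _ _ _
  have hK_symm : ∀ θ φ, K θ φ + K φ θ = sin θ ^ m * sin φ ^ m *
      ((cos φ ^ 2 - cos θ ^ 2) *
        (cosh (a * cos θ) * cosh (b * cos φ) - cosh (a * cos φ) * cosh (b * cos θ))) := by
    intro θ φ
    simp only [hK, pow_add, sin_sq]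
    ring
  have hpos : 0 < ∫ θ in (0:ℝ)..π, ∫ φ in (0:ℝ)..π, (K θ φ + K φ θ) := by
    simp only [hK_symm]
    refine intervalIntegral_intervalIntegral_pos_of_continuous_of_pos_at (x₀ := π / 2)
      (y₀ := π / 3) (by fun_prop) (fun θ hθ φ hφ => ?_) ⟨by positivity, by linarith [pi_pos]⟩
      ⟨by positivity, by linarith [pi_pos]⟩ ?_
    · have := sin_nonneg_of_nonneg_of_le_pi hθ.1 hθ.2
      have := sin_nonneg_of_nonneg_of_le_pi hφ.1 hφ.2
      have := sq_sub_sq_mul_cosh_mul_cosh_sub_nonneg hab2 (cos θ) (cos φ)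
      positivity
    · rw [sin_pi_div_two, sin_pi_div_three, cos_pi_div_two]
      exact mul_pos (by positivity)
        (sq_sub_sq_mul_cosh_mul_cosh_sub_pos hab2 (by rw [cos_pi_div_three]; norm_num))
  rw [intervalIntegral_intervalIntegral_add_swap hK_cont, hK_integral] at hpos
  linarith

theorem strictMonoOn_vonMisesIntegral_div (m : ℕ) :
    StrictMonoOn (fun κ => vonMisesIntegral m κ / vonMisesIntegral (m + 2) κ) (Ici 0) :=
  fun a ha b _ hab => (div_lt_div_iff₀ (vonMisesIntegral_pos _ a) (vonMisesIntegral_pos _ b)).2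
    (vonMisesIntegral_mul_lt_mul ha hab m)

theorem div_orderParam_add_two (m : ℕ) (r κ : ℝ) :
    r / orderParam (m + 2) κ =
      (m + 1) * (r / κ) * (vonMisesIntegral m κ / vonMisesIntegral (m + 2) κ) := by
  rw [orderParam_add_two, div_div_eq_mul_div]
  ring

theorem div_le_div_of_antitoneOn_div {h : ℝ → ℝ} (hmono : StrictMonoOn h (Ici 0))
    (hdec : AntitoneOn (fun r => h r / r) (Ioi 0)) {r₁ r₂ : ℝ} (hr₁ : 0 < r₁) (hr₂ : 0 ≤ r₂)
    (hpos : 0 < h r₁) (hle : h r₁ ≤ h r₂) :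
    r₁ / h r₁ ≤ r₂ / h r₂ := by
  have hr : r₁ ≤ r₂ := (hmono.le_iff_le hr₁.le hr₂).1 hle
  have hdiv : h r₂ / r₂ ≤ h r₁ / r₁ := hdec hr₁ (hr₁.trans_le hr) hr
  rw [← inv_div, ← inv_div (h r₂)]
  exact (inv_le_inv₀ (div_pos hpos hr₁) (div_pos (hpos.trans_le hle) (hr₁.trans_le hr))).2 hdiv

theorem sigma_div_orderParam_strictMono_general (n : ℕ) (hn : 2 ≤ n)
    (h σ : ℝ → ℝ) (κmax : EReal)
    (hmono : StrictMonoOn h (Set.Ici 0))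
    (h0 : h 0 = 0)
    (hsurj : ∀ κ : ℝ, 0 ≤ κ → (κ : EReal) < κmax → ∃ r, 0 ≤ r ∧ h r = κ)
    (hσ : ∀ r : ℝ, 0 ≤ r → σ (h r) = r)
    (hdec : AntitoneOn (fun r : ℝ => h r / r) (Set.Ioi 0)) :
    StrictMonoOn (fun κ : ℝ => σ κ / orderParam n κ)
      {κ : ℝ | 0 < κ ∧ (κ : EReal) < κmax} := by
  rintro _ ⟨hκ₁, hκ₁max⟩ _ ⟨hκ₂, hκ₂max⟩ hlt
  obtain ⟨m, rfl⟩ := Nat.exists_eq_add_of_le' hn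
  obtain ⟨r₁, hr₁, rfl⟩ := hsurj _ hκ₁.le hκ₁max
  obtain ⟨r₂, hr₂, rfl⟩ := hsurj _ hκ₂.le hκ₂max
  have hr₁_pos : 0 < r₁ := hr₁.lt_of_ne (by rintro rfl; exact hκ₁.ne' h0)
  have hle := div_le_div_of_antitoneOn_div hmono hdec hr₁_pos hr₂ hκ₁ hlt.le
  simp only [hσ r₁ hr₁, hσ r₂ hr₂, div_orderParam_add_two]
  exact mul_lt_mul_of_le_of_lt_of_pos_of_nonneg (by gcongr)
    (strictMonoOn_vonMisesIntegral_div m hκ₁.le hκ₂.le hlt) (by positivity)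
    (div_nonneg (vonMisesIntegral_pos _ _).le (vonMisesIntegral_pos _ _).le)

/-- If `r ↦ h(r)/r` is non-increasing on `(0,∞)`, then `κ ↦ σ(κ)/c(κ)` is strictly
increasing on `(0, κmax)`. -/
theorem sigma_div_orderParam_strictMono (n : ℕ) (hn : 2 ≤ n)
    (h σ : ℝ → ℝ) (κmax : EReal) (hκmax : 0 < κmax)
    (hcont : ContinuousOn h (Set.Ici 0)) (hmono : StrictMonoOn h (Set.Ici 0))
    (h0 : h 0 = 0)
    (hrange : ∀ r : ℝ, 0 ≤ r → 0 ≤ h r ∧ (h r : EReal) < κmax)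
    (hsurj : ∀ κ : ℝ, 0 ≤ κ → (κ : EReal) < κmax → ∃ r, 0 ≤ r ∧ h r = κ)
    (hσ : ∀ r : ℝ, 0 ≤ r → σ (h r) = r)
    (hdec : AntitoneOn (fun r : ℝ => h r / r) (Set.Ioi 0)) :
    StrictMonoOn (fun κ : ℝ => σ κ / orderParam n κ)
      {κ : ℝ | 0 < κ ∧ (κ : EReal) < κmax} :=
  sigma_div_orderParam_strictMono_general n hn h σ κmax hmono h0 hsurj hσ hdec
end

section
/- If ρ > ρ_c, then there exists κ ∈ (0, κ_max) satisfying the compatibility equation σ(κ) = ρ c(κ). -/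
/-!
On `[0, ∞)` the map `r ↦ ρ c(h r)` is continuous and bounded by `ρ`, since `c ≤ 1`. Near `0` it
exceeds `r`: against the odd weight `cos θ` only the `sinh` part of `exp (κ cos θ)` survives, and
`t sinh (κ t) ≥ κ t²` gives `c(κ) ≥ κ e^{-κ} / n`, so `ρ c(h r) ≳ ρ L r / n > r`. The intermediate
value theorem yields `r > 0` with `ρ c(h r) = r`, and `κ = h r` solves `σ(κ) = ρ c(κ)`.
-/

open MeasureTheory Real Filter

open Set Topology

lemma mul_sq_le_mul_sinh_mul {κ : ℝ} (hκ : 0 ≤ κ) (t : ℝ) : κ * t ^ 2 ≤ t * sinh (κ * t) := by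
  rcases le_total 0 t with ht | ht
  · have := mul_le_mul_of_nonneg_left (self_le_sinh_iff.2 (mul_nonneg hκ ht)) ht
    linarith
  · have := mul_le_mul_of_nonpos_left (sinh_le_self_iff.2 (mul_nonpos_of_nonneg_of_nonpos hκ ht)) ht
    linarith

section SphericalIntegrals

variable (m : ℕ)

lemma integral_comp_cos_mul_sin_pow_eq_zero {f : ℝ → ℝ} (hf : Function.Odd f) :
    ∫ θ in (0:ℝ)..π, f (cos θ) * sin θ ^ m = 0 := by
  have hsymm := intervalIntegral.integral_comp_sub_left
    (fun θ => f (cos θ) * sin θ ^ m) (a := 0) (b := π) π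
  simp only [cos_pi_sub, sin_pi_sub, hf _, neg_mul, intervalIntegral.integral_neg,
    sub_zero, sub_self] at hsymm
  linarith

lemma integral_cos_sq_mul_sin_pow :
    ∫ θ in (0:ℝ)..π, cos θ ^ 2 * sin θ ^ m = (∫ θ in (0:ℝ)..π, sin θ ^ m) / (m + 2) := by
  have hsplit : ∫ θ in (0:ℝ)..π, cos θ ^ 2 * sin θ ^ m
      = (∫ θ in (0:ℝ)..π, sin θ ^ m) - ∫ θ in (0:ℝ)..π, sin θ ^ (m + 2) := by
    rw [← intervalIntegral.integral_sub (by apply Continuous.intervalIntegrable; fun_prop)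
      (by apply Continuous.intervalIntegrable; fun_prop)]
    refine intervalIntegral.integral_congr fun θ _ => ?_
    linear_combination sin θ ^ m * sin_sq_add_cos_sq θ
  rw [hsplit, integral_sin_pow m]
  simp only [sin_zero, sin_pi, cos_zero, cos_pi]
  field_simp
  ring

variable (κ : ℝ)

lemma integral_exp_mul_cos_mul_sin_pow_pos :
    0 < ∫ θ in (0:ℝ)..π, exp (κ * cos θ) * sin θ ^ m :=
  intervalIntegral.intervalIntegral_pos_of_pos_on
    (by apply Continuous.intervalIntegrable; fun_prop)
    (fun θ hθ => mul_pos (exp_pos _) (pow_pos (sin_pos_of_pos_of_lt_pi hθ.1 hθ.2) m)) pi_pos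

lemma integral_cos_mul_exp_le_integral_exp :
    ∫ θ in (0:ℝ)..π, cos θ * exp (κ * cos θ) * sin θ ^ m ≤
      ∫ θ in (0:ℝ)..π, exp (κ * cos θ) * sin θ ^ m := by
  refine intervalIntegral.integral_mono_on pi_pos.le
    (by apply Continuous.intervalIntegrable; fun_prop)
    (by apply Continuous.intervalIntegrable; fun_prop) fun θ hθ => ?_
  have hs : 0 ≤ exp (κ * cos θ) * sin θ ^ m :=
    mul_nonneg (exp_pos _).le (pow_nonneg (sin_nonneg_of_nonneg_of_le_pi hθ.1 hθ.2) m)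
  nlinarith [cos_le_one θ]

variable {κ}

lemma integral_exp_mul_cos_mul_sin_pow_le (hκ : 0 ≤ κ) :
    ∫ θ in (0:ℝ)..π, exp (κ * cos θ) * sin θ ^ m ≤ exp κ * ∫ θ in (0:ℝ)..π, sin θ ^ m := by
  rw [← intervalIntegral.integral_const_mul]
  refine intervalIntegral.integral_mono_on pi_pos.le
    (by apply Continuous.intervalIntegrable; fun_prop)
    (by apply Continuous.intervalIntegrable; fun_prop) fun θ hθ => ?_
  have hs := pow_nonneg (sin_nonneg_of_nonneg_of_le_pi hθ.1 hθ.2) m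
  gcongr
  nlinarith [cos_le_one θ]

lemma mul_integral_sin_pow_div_le_integral_cos_mul_exp (hκ : 0 ≤ κ) :
    κ * (∫ θ in (0:ℝ)..π, sin θ ^ m) / (m + 2) ≤
      ∫ θ in (0:ℝ)..π, cos θ * exp (κ * cos θ) * sin θ ^ m := by
  have hcosh : ∫ θ in (0:ℝ)..π, cos θ * cosh (κ * cos θ) * sin θ ^ m = 0 :=
    integral_comp_cos_mul_sin_pow_eq_zero m (f := fun t => t * cosh (κ * t))
      fun t => by simp only [mul_neg, cosh_neg, neg_mul]
  calc κ * (∫ θ in (0:ℝ)..π, sin θ ^ m) / (m + 2)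
      = ∫ θ in (0:ℝ)..π, κ * cos θ ^ 2 * sin θ ^ m := by
        simp only [mul_assoc, intervalIntegral.integral_const_mul,
          integral_cos_sq_mul_sin_pow, mul_div_assoc]
    _ ≤ ∫ θ in (0:ℝ)..π, cos θ * sinh (κ * cos θ) * sin θ ^ m := by
        refine intervalIntegral.integral_mono_on pi_pos.le
          (by apply Continuous.intervalIntegrable; fun_prop)
          (by apply Continuous.intervalIntegrable; fun_prop) fun θ hθ => ?_
        have hs := pow_nonneg (sin_nonneg_of_nonneg_of_le_pi hθ.1 hθ.2) m
        exact mul_le_mul_of_nonneg_right (mul_sq_le_mul_sinh_mul hκ (cos θ)) hs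
    _ = (∫ θ in (0:ℝ)..π, cos θ * cosh (κ * cos θ) * sin θ ^ m) +
          ∫ θ in (0:ℝ)..π, cos θ * sinh (κ * cos θ) * sin θ ^ m := by
        rw [hcosh, zero_add]
    _ = ∫ θ in (0:ℝ)..π, cos θ * exp (κ * cos θ) * sin θ ^ m := by
        rw [← intervalIntegral.integral_add (by apply Continuous.intervalIntegrable; fun_prop)
          (by apply Continuous.intervalIntegrable; fun_prop)]
        simp only [← add_mul, ← mul_add, cosh_add_sinh]

end SphericalIntegrals

lemma orderParam_le_one (n : ℕ) (κ : ℝ) : orderParam n κ ≤ 1 :=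
  (div_le_one (integral_exp_mul_cos_mul_sin_pow_pos _ κ)).2
    (integral_cos_mul_exp_le_integral_exp _ κ)

lemma continuous_orderParam (n : ℕ) : Continuous (orderParam n) :=
  (intervalIntegral.continuous_parametric_intervalIntegral_of_continuous' (by fun_prop) 0 π).div
    (intervalIntegral.continuous_parametric_intervalIntegral_of_continuous' (by fun_prop) 0 π)
    fun κ => (integral_exp_mul_cos_mul_sin_pow_pos _ κ).ne'

lemma mul_exp_neg_div_le_orderParam {n : ℕ} (hn : 2 ≤ n) {κ : ℝ} (hκ : 0 ≤ κ) :
    κ * exp (-κ) / n ≤ orderParam n κ := by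
  have hn' : (n : ℝ) = (n - 2 : ℕ) + 2 := by rw [Nat.cast_sub hn]; ring
  rw [orderParam, le_div_iff₀ (integral_exp_mul_cos_mul_sin_pow_pos _ κ)]
  calc κ * exp (-κ) / n * ∫ θ in (0:ℝ)..π, exp (κ * cos θ) * sin θ ^ (n - 2)
      ≤ κ * exp (-κ) / n * (exp κ * ∫ θ in (0:ℝ)..π, sin θ ^ (n - 2)) := by
        gcongr
        exact integral_exp_mul_cos_mul_sin_pow_le _ hκ
    _ = κ * (∫ θ in (0:ℝ)..π, sin θ ^ (n - 2)) / ((n - 2 : ℕ) + 2) := by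
        rw [exp_neg, ← hn']
        field_simp
    _ ≤ _ := mul_integral_sin_pow_div_le_integral_cos_mul_exp _ hκ

lemma exists_pos_eq_of_eventually_lt_of_le {g : ℝ → ℝ} {B : ℝ} (hg : ContinuousOn g (Ioi 0))
    (hsmall : ∀ᶠ r in 𝓝[>] 0, r < g r) (hbdd : ∀ r, 0 < r → g r ≤ B) :
    ∃ r, 0 < r ∧ g r = r := by
  obtain ⟨r₀, hr₀, hr₀pos⟩ := (hsmall.and self_mem_nhdsWithin).exists
  set r₁ := max r₀ B
  have hr₁pos : 0 < r₁ := lt_max_of_lt_left hr₀pos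
  have hcont : ContinuousOn (fun r => g r - r) (Icc r₀ r₁) :=
    (hg.mono fun r hr => lt_of_lt_of_le hr₀pos hr.1).sub continuousOn_id
  have hsign : (0 : ℝ) ∈ Icc (g r₁ - r₁) (g r₀ - r₀) :=
    ⟨by linarith [hbdd r₁ hr₁pos, le_max_right r₀ B], by linarith⟩
  obtain ⟨r, hr, hgr⟩ := intermediate_value_Icc' (le_max_left r₀ B) hcont hsign
  exact ⟨r, lt_of_lt_of_le hr₀pos hr.1, sub_eq_zero.1 hgr⟩

lemma eventually_lt_mul_orderParam_comp {n : ℕ} (hn : 2 ≤ n) {h : ℝ → ℝ} {L ρ : ℝ}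
    (hL : Tendsto (fun r => h r / r) (𝓝[>] 0) (𝓝 L)) (hLpos : 0 < L) (hρL : n < ρ * L) :
    ∀ᶠ r in 𝓝[>] 0, r < ρ * orderParam n (h r) := by
  have hρ : 0 < ρ := pos_of_mul_pos_left ((Nat.cast_nonneg n).trans_lt hρL) hLpos.le
  have hn0 : (0 : ℝ) < n := by exact_mod_cast (two_pos.trans_le hn)
  have hh : Tendsto h (𝓝[>] 0) (𝓝 0) := by
    have hmul := hL.mul (tendsto_nhdsWithin_of_tendsto_nhds (tendsto_id (x := 𝓝 (0 : ℝ))))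
    rw [mul_zero] at hmul
    refine hmul.congr' ?_
    filter_upwards [self_mem_nhdsWithin] with r hr
    exact div_mul_cancel₀ _ (ne_of_gt hr)
  have hlim : Tendsto (fun r => ρ * (h r / r) * exp (-h r)) (𝓝[>] 0) (𝓝 (ρ * L * exp (-0))) :=
    (tendsto_const_nhds.mul hL).mul ((continuous_exp.tendsto _).comp hh.neg)
  rw [neg_zero, exp_zero, mul_one] at hlim
  filter_upwards [hlim.eventually_const_lt hρL, hL.eventually_const_lt hLpos,
    self_mem_nhdsWithin] with r hlt hpos hr
  have hr : 0 < r := hr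
  have hhr : 0 ≤ h r := (div_pos_iff_of_pos_right hr).1 hpos |>.le
  calc r < ρ * (h r * exp (-h r) / n) := by
        rw [mul_div_assoc', lt_div_iff₀ hn0]
        calc r * n < r * (ρ * (h r / r) * exp (-h r)) := mul_lt_mul_of_pos_left hlt hr
          _ = ρ * (h r * exp (-h r)) := by field_simp
    _ ≤ ρ * orderParam n (h r) := by gcongr; exact mul_exp_neg_div_le_orderParam hn hhr

theorem compatibility_exists_above_rho_c_general (n : ℕ) (hn : 2 ≤ n)
    (h σ : ℝ → ℝ) (κmax : EReal)
    (hcont : ContinuousOn h (Set.Ici 0)) (hmono : StrictMonoOn h (Set.Ici 0))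
    (h0 : h 0 = 0)
    (hrange : ∀ r : ℝ, 0 ≤ r → 0 ≤ h r ∧ (h r : EReal) < κmax)
    (hσ : ∀ r : ℝ, 0 ≤ r → σ (h r) = r)
    (L : ℝ) (hLpos : 0 < L)
    (hL : Tendsto (fun r : ℝ => h r / r) (nhdsWithin 0 (Set.Ioi 0)) (nhds L))
    (ρc : ℝ) (hρc : ρc = n / L)
    (ρ : ℝ) (hρ : ρc < ρ) :
    ∃ κ : ℝ, 0 < κ ∧ (κ : EReal) < κmax ∧ σ κ = ρ * orderParam n κ := by
  have hρL : (n : ℝ) < ρ * L := (div_lt_iff₀ hLpos).1 (hρc ▸ hρ)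
  have hρ0 : 0 ≤ ρ := (div_nonneg (Nat.cast_nonneg n) hLpos.le).trans (hρc ▸ hρ.le)
  obtain ⟨r, hr, hfix⟩ := exists_pos_eq_of_eventually_lt_of_le
    (g := fun r => ρ * orderParam n (h r)) (B := ρ)
    (continuousOn_const.mul ((continuous_orderParam n).comp_continuousOn
      (hcont.mono Ioi_subset_Ici_self)))
    (eventually_lt_mul_orderParam_comp hn hL hLpos hρL)
    fun r _ => mul_le_of_le_one_right hρ0 (orderParam_le_one n (h r))
  refine ⟨h r, h0 ▸ hmono (mem_Ici.2 le_rfl) hr.le hr, (hrange r hr.le).2, ?_⟩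
  rw [hσ r hr.le, hfix]

/-- If `ρ > ρ_c`, the compatibility equation `σ(κ) = ρ c(κ)` has a solution
`κ ∈ (0, κmax)`. -/
theorem compatibility_exists_above_rho_c (n : ℕ) (hn : 2 ≤ n)
    (h σ : ℝ → ℝ) (κmax : EReal) (hκmax : 0 < κmax)
    (hcont : ContinuousOn h (Set.Ici 0)) (hmono : StrictMonoOn h (Set.Ici 0))
    (h0 : h 0 = 0)
    (hrange : ∀ r : ℝ, 0 ≤ r → 0 ≤ h r ∧ (h r : EReal) < κmax)
    (hsurj : ∀ κ : ℝ, 0 ≤ κ → (κ : EReal) < κmax → ∃ r, 0 ≤ r ∧ h r = κ)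
    (hσ : ∀ r : ℝ, 0 ≤ r → σ (h r) = r)
    (L : ℝ) (hLpos : 0 < L)
    (hL : Tendsto (fun r : ℝ => h r / r) (nhdsWithin 0 (Set.Ioi 0)) (nhds L))
    (ρc : ℝ) (hρc : ρc = n / L)
    (ρ : ℝ) (hρ : ρc < ρ) :
    ∃ κ : ℝ, 0 < κ ∧ (κ : EReal) < κmax ∧ σ κ = ρ * orderParam n κ :=
  compatibility_exists_above_rho_c_general n hn h σ κmax hcont hmono h0 hrange hσ L hLpos hL ρc hρc
    ρ hρ
end
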